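/- If (D_λ)_{λ∈Λ} is a family of commutative rings each satisfying property (++), then (U) = {a ∈ R | S(a) ∈ U} is a maximal ideal of R = ∏_{λ∈Λ} D_λ for every ultrafilter U in B. -/

import Mathlib

/-!
Common setup: `Λ` is an index set, `D λ` a family of commutative rings,
`R = ∏ λ, D λ` the product ring, and
`B = ∏ λ, P(max (D λ))` the product Boolean algebra of the power sets of the
sets of maximal ideals, realized as the Pi type `∀ l, Set (MaximalSpectrum (D l))`
with its componentwise Boolean algebra structure (meet = componentwise ∩,
join = componentwise ∪, `⊥ = (∅)_λ`, complement componentwise, order = componentwise ⊆).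
-/

variable {Λ : Type*} {D : Λ → Type*}

/-- `S(a) = (V(a_λ))_λ ∈ B`, where `V(x)` is the set of maximal ideals containing `x`. -/
def SFam [∀ l, CommRing (D l)] (a : ∀ l, D l) : ∀ l, Set (MaximalSpectrum (D l)) :=
  fun l => {P | a l ∈ P.asIdeal}

/-- `z(x) = {λ | x_λ = 0}`. -/
def ZFam [∀ l, CommRing (D l)] (x : ∀ l, D l) : Set Λ := {l | x l = 0}

/-- A filter in a Boolean algebra: a nonempty subset not containing `⊥`, closed
under meets, and upward closed. -/
def IsBFilter {B : Type*} [BooleanAlgebra B] (U : Set B) : Prop :=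
  U.Nonempty ∧ ⊥ ∉ U ∧ (∀ X ∈ U, ∀ Y ∈ U, X ⊓ Y ∈ U) ∧ (∀ Y ∈ U, ∀ Z, Y ≤ Z → Z ∈ U)

/-- An ultrafilter in a Boolean algebra: a filter containing `Y` or `Yᶜ` for every `Y`. -/
def IsBUltrafilter {B : Type*} [BooleanAlgebra B] (U : Set B) : Prop :=
  IsBFilter U ∧ ∀ Y, Y ∈ U ∨ Yᶜ ∈ U

/-- Property (+): for all `r` and all nonzero `a` there is `d` lying in every maximal
ideal containing `a` but not `r`, and in no maximal ideal containing `r`. -/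
def PropertyPlus (A : Type*) [CommRing A] : Prop :=
  ∀ r a : A, a ≠ 0 → ∃ d : A,
    (∀ M : Ideal A, M.IsMaximal → a ∈ M → r ∉ M → d ∈ M) ∧
    (∀ M : Ideal A, M.IsMaximal → r ∈ M → d ∉ M)

/-- Property (++): for every `r` there is `d` with `D(r) = V(d)`, i.e. the maximal
ideals containing `d` are exactly those not containing `r`. -/
def PropertyPlusPlus (A : Type*) [CommRing A] : Prop :=
  ∀ r : A, ∃ d : A, ∀ P : MaximalSpectrum A, d ∈ P.asIdeal ↔ r ∉ P.asIdeal

/-!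
The ideal `(U)` is closed under addition and multiplication because `S` turns sums into
supersets of meets and products into supersets, and it is proper because `S 1 = ⊥`.
For maximality, take `b ∉ (U)`. Property (++), applied componentwise, gives `d` with
`S d = (S b)ᶜ`; this lies in `U` since `U` is an ultrafilter, so `d ∈ (U)`. In each
component every maximal ideal contains exactly one of `b λ`, `d λ`, hence none contains
`b λ + d λ`, so `b + d` is a unit and any ideal containing `(U)` and `b` is the whole ring.
-/

theorem IsBFilter.top_mem {B : Type*} [BooleanAlgebra B] {U : Set B} (hU : IsBFilter U) :
    ⊤ ∈ U :=
  let ⟨Y, hY⟩ := hU.1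
  hU.2.2.2 Y hY ⊤ le_top

theorem isUnit_add_of_forall_mem_iff_not_mem {A : Type*} [CommRing A] {b d : A}
    (h : ∀ P : MaximalSpectrum A, d ∈ P.asIdeal ↔ b ∉ P.asIdeal) : IsUnit (b + d) := by
  by_contra hunit
  obtain ⟨M, hM, hbd⟩ := exists_max_ideal_of_mem_nonunits hunit
  have hP := h ⟨M, hM⟩
  by_cases hb : b ∈ M
  · exact hP.mp ((M.add_mem_iff_right hb).mp hbd) hb
  · exact hb ((M.add_mem_iff_left (hP.mpr hb)).mp hbd)

section SFam

variable [∀ l, CommRing (D l)]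

theorem SFam_zero : SFam (0 : ∀ l, D l) = ⊤ := by
  funext l
  ext P
  simp [SFam]

theorem SFam_one : SFam (1 : ∀ l, D l) = ⊥ := by
  funext l
  ext P
  simpa [SFam] using P.asIdeal.ne_top_iff_one.mp P.isMaximal.ne_top

theorem inf_SFam_le_SFam_add (a b : ∀ l, D l) : SFam a ⊓ SFam b ≤ SFam (a + b) :=
  fun _ _ hP => Ideal.add_mem _ hP.1 hP.2

theorem SFam_le_SFam_mul (a b : ∀ l, D l) : SFam b ≤ SFam (a * b) :=
  fun l _ hP => Ideal.mul_mem_left _ (a l) hP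

theorem exists_SFam_eq_compl (hpp : ∀ l, PropertyPlusPlus (D l)) (b : ∀ l, D l) :
    ∃ d : ∀ l, D l, SFam d = (SFam b)ᶜ := by
  choose d hd using fun l => hpp l (b l)
  exact ⟨d, funext fun l => Set.ext (hd l)⟩

theorem isUnit_add_of_SFam_eq_compl {b d : ∀ l, D l} (h : SFam d = (SFam b)ᶜ) :
    IsUnit (b + d) :=
  Pi.isUnit_iff.mpr fun l =>
    isUnit_add_of_forall_mem_iff_not_mem fun P => Set.ext_iff.mp (congrFun h l) P

/-- The ideal `(U) = {a | S a ∈ U}` of a filter `U` in `B`. -/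
def IsBFilter.ideal {U : Set (∀ l, Set (MaximalSpectrum (D l)))} (hU : IsBFilter U) :
    Ideal (∀ l, D l) where
  carrier := {a | SFam a ∈ U}
  zero_mem' := by simpa [SFam_zero] using hU.top_mem
  add_mem' {a b} ha hb := hU.2.2.2 _ (hU.2.2.1 _ ha _ hb) _ (inf_SFam_le_SFam_add a b)
  smul_mem' a b hb := hU.2.2.2 _ hb _ (SFam_le_SFam_mul a b)

theorem IsBFilter.mem_ideal {U : Set (∀ l, Set (MaximalSpectrum (D l)))} (hU : IsBFilter U)
    {a : ∀ l, D l} : a ∈ hU.ideal ↔ SFam a ∈ U :=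
  Iff.rfl

theorem IsBUltrafilter.isMaximal_ideal (hpp : ∀ l, PropertyPlusPlus (D l))
    {U : Set (∀ l, Set (MaximalSpectrum (D l)))} (hU : IsBUltrafilter U) :
    hU.1.ideal.IsMaximal := by
  refine Ideal.isMaximal_iff.mpr ⟨?_, fun J b hIJ hb hbJ => ?_⟩
  · rw [IsBFilter.mem_ideal, SFam_one]
    exact hU.1.2.1
  obtain ⟨d, hd⟩ := exists_SFam_eq_compl hpp b
  have hdI : d ∈ hU.1.ideal := by
    rw [IsBFilter.mem_ideal, hd]
    exact (hU.2 (SFam b)).resolve_left hb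
  rw [J.eq_top_of_isUnit_mem (J.add_mem hbJ (hIJ hdI)) (isUnit_add_of_SFam_eq_compl hd)]
  exact Submodule.mem_top

end SFam

theorem stmt_11_general [∀ l, CommRing (D l)]
    (hpp : ∀ l, PropertyPlusPlus (D l))
    (U : Set (∀ l, Set (MaximalSpectrum (D l)))) (hU : IsBUltrafilter U) :
    ∃ I : Ideal (∀ l, D l), (∀ r, r ∈ I ↔ SFam r ∈ U) ∧ I.IsMaximal :=
  ⟨hU.1.ideal, fun _ => hU.1.mem_ideal, hU.isMaximal_ideal hpp⟩

/-- If every `D l` satisfies property (++), then `(U)` is a maximal ideal of `R` for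
every ultrafilter `U` in `B`. -/
theorem stmt_11 [∀ l, CommRing (D l)] [∀ l, Nontrivial (D l)]
    (hpp : ∀ l, PropertyPlusPlus (D l))
    (U : Set (∀ l, Set (MaximalSpectrum (D l)))) (hU : IsBUltrafilter U) :
    ∃ I : Ideal (∀ l, D l), (∀ r, r ∈ I ↔ SFam r ∈ U) ∧ I.IsMaximal :=
  stmt_11_general hpp U hU
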